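/- The additive group F_p((t)) is an elementary abelian p-group, and any F_p-linear action of F_p((t)) on an F_p-vector space V such that every finitely generated subrepresentation is finite-dimensional, with V infinite-dimensional and V^G finite-dimensional (G = image of the action), has (V/V^G)^G infinite-dimensional. -/

import Mathlib

/-! Let `V₀ = 0` and `V_{n+1} = {v | (g - 1) v ∈ V_n for all g}`, so `V₁ = V^G` and `V₂/V₁` embeds
into `(V/V^G)^G`; both are finite-dimensional. As `End V₂` is finite, a finite set `R ⊆ G` acts on `V₂`
in every way `G` does, and a product of `n` operators `g - 1` on `V_{n+1}` lands in `V^G` and only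
depends on these representatives; hence `V_{n+1}/V_n` embeds into the maps `Rⁿ → V^G` and every `V_n`
is finite-dimensional. The operators `g - 1` commute and satisfy `(g - 1)^p = g^p - 1 = 0`, so by
pigeonhole every product of more than `|R|(p - 1)` of them with entries in `R` vanishes: the series
stops growing at `|R|(p - 1) + 1`. The same argument on a finite-dimensional subrepresentation shows
that every vector lies in some `V_n`, so `V` is finite-dimensional. -/

open LaurentSeries

/-- A representation is locally finite if every finite subset is contained in a
finite-dimensional subrepresentation. -/
def Representation.IsLocallyFinite {k G V : Type*} [Field k] [Monoid G]
    [AddCommGroup V] [Module k V] (ρ : Representation k G V) : Prop :=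
  ∀ s : Finset V, ∃ W : Submodule k V,
    (∀ g : G, ∀ v ∈ W, ρ g v ∈ W) ∧ (s : Set V) ⊆ (W : Set V) ∧ FiniteDimensional k W

/-- The representation induced on the quotient of `V` by the subspace of invariants. -/
noncomputable def Representation.quotInvariants {k G V : Type*} [CommRing k] [Group G]
    [AddCommGroup V] [Module k V] (ρ : Representation k G V) :
    Representation k G (V ⧸ ρ.invariants) where
  toFun g := Submodule.mapQ ρ.invariants ρ.invariants (ρ g)
    (fun v hv => by
      simp only [Submodule.mem_comap]
      rw [(Representation.mem_invariants ρ v).mp hv g]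
      exact hv)
  map_one' := by
    refine LinearMap.ext fun x => ?_
    obtain ⟨v, rfl⟩ := Submodule.Quotient.mk_surjective _ x
    simp [Submodule.mapQ_apply]
  map_mul' g h := by
    refine LinearMap.ext fun x => ?_
    obtain ⟨v, rfl⟩ := Submodule.Quotient.mk_surjective _ x
    simp [Submodule.mapQ_apply]

theorem List.exists_lt_count_of_mul_lt_length {α : Type*} [DecidableEq α] {s : Finset α}
    {l : List α} (hl : ∀ a ∈ l, a ∈ s) {n : ℕ} (hn : s.card * n < l.length) :
    ∃ a ∈ s, n < l.count a := by
  by_contra! h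
  have hsum := Multiset.sum_count_eq_card (m := (l : Multiset α)) hl
  have := Finset.sum_le_card_nsmul s _ n h
  simp only [Multiset.coe_count, Multiset.coe_card, smul_eq_mul] at hsum this
  omega

theorem List.prod_eq_zero_of_le_count {M : Type*} [MonoidWithZero M] [DecidableEq M]
    {l : List M} (hl : l.Pairwise Commute) {a : M} {n : ℕ} (ha : a ^ n = 0)
    (hn : n ≤ l.count a) : l.prod = 0 := by
  obtain ⟨t, ht⟩ := (List.replicate_sublist_iff.2 hn).exists_perm_append
  rw [ht.prod_eq' hl, List.prod_append, List.prod_replicate, ha, zero_mul]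

namespace Representation

variable {k G V : Type*} [Field k] [CommGroup G] [AddCommGroup V] [Module k V]
  (ρ : Representation k G V)

def invariantsSeries : ℕ → Submodule k V
  | 0 => ⊥
  | n + 1 => ⨅ g : G, (invariantsSeries n).comap (ρ g - 1)

def subOneProd (l : List G) : Module.End k V :=
  (l.map fun g => ρ g - 1).prod

variable {ρ}

theorem mem_invariantsSeries_succ {n : ℕ} {v : V} :
    v ∈ ρ.invariantsSeries (n + 1) ↔ ∀ g, (ρ g - 1) v ∈ ρ.invariantsSeries n := by
  simp [invariantsSeries, Submodule.mem_iInf]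

variable (ρ)

theorem invariantsSeries_zero : ρ.invariantsSeries 0 = ⊥ := rfl

theorem invariantsSeries_one : ρ.invariantsSeries 1 = ρ.invariants := by
  ext v
  simp [mem_invariantsSeries_succ, invariantsSeries_zero, sub_eq_zero]

theorem invariantsSeries_mono : Monotone ρ.invariantsSeries := by
  refine monotone_nat_of_le_succ fun n => ?_
  induction n with
  | zero => exact bot_le
  | succ n ih =>
    intro v hv
    exact mem_invariantsSeries_succ.2 fun g => ih (mem_invariantsSeries_succ.1 hv g)

theorem commute_sub_one (g h : G) : Commute (ρ g - 1) (ρ h - 1) :=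
  (((Commute.all g h).map ρ).sub_left (Commute.one_left _)).sub_right (Commute.one_right _)

theorem map_mem_invariantsSeries (n : ℕ) (g : G) {v : V} (hv : v ∈ ρ.invariantsSeries n) :
    ρ g v ∈ ρ.invariantsSeries n := by
  induction n generalizing v with
  | zero => simp_all [invariantsSeries_zero]
  | succ n ih =>
    refine mem_invariantsSeries_succ.2 fun h => ?_
    have hcomm : Commute (ρ g) (ρ h - 1) :=
      ((Commute.all g h).map ρ).sub_right (Commute.one_right _)
    rw [← Module.End.mul_apply, ← hcomm.eq, Module.End.mul_apply]
    exact ih (mem_invariantsSeries_succ.1 hv h)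

@[simp] theorem subOneProd_nil : ρ.subOneProd [] = 1 := rfl

@[simp] theorem subOneProd_cons (g : G) (l : List G) :
    ρ.subOneProd (g :: l) = (ρ g - 1) * ρ.subOneProd l := rfl

theorem subOneProd_append (l l' : List G) :
    ρ.subOneProd (l ++ l') = ρ.subOneProd l * ρ.subOneProd l' := by
  simp [subOneProd]

theorem commute_sub_one_subOneProd (g : G) (l : List G) :
    Commute (ρ g - 1) (ρ.subOneProd l) :=
  Commute.list_prod_right _ _ <| by simpa using fun h _ => ρ.commute_sub_one g h

theorem subOneProd_cons_apply (g : G) (l : List G) (v : V) :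
    ρ.subOneProd (g :: l) v = ρ.subOneProd l ((ρ g - 1) v) := by
  rw [subOneProd_cons, (ρ.commute_sub_one_subOneProd g l).eq, Module.End.mul_apply]

theorem subOneProd_apply_mem {m : ℕ} (l : List G) {v : V}
    (hv : v ∈ ρ.invariantsSeries (m + l.length)) :
    ρ.subOneProd l v ∈ ρ.invariantsSeries m := by
  induction l generalizing m with
  | nil => simpa using hv
  | cons g l ih =>
    rw [subOneProd_cons, Module.End.mul_apply]
    refine mem_invariantsSeries_succ.1 (ih ?_) g
    rwa [List.length_cons, ← add_assoc, add_right_comm] at hv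

theorem mem_invariantsSeries_of_subOneProd {n : ℕ} {v : V}
    (h : ∀ l : List G, l.length = n → ρ.subOneProd l v = 0) : v ∈ ρ.invariantsSeries n := by
  induction n generalizing v with
  | zero => simpa [invariantsSeries_zero] using h [] rfl
  | succ n ih =>
    refine mem_invariantsSeries_succ.2 fun g => ih fun l hl => ?_
    simpa [subOneProd_append] using h (l ++ [g]) (by simp [hl])

theorem subOneProd_apply_mem_of_forall_mem {U : Submodule k V}
    (hU : ∀ g : G, ∀ v ∈ U, ρ g v ∈ U) (l : List G) {u : V} (hu : u ∈ U) :
    ρ.subOneProd l u ∈ U := by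
  induction l with
  | nil => simpa
  | cons g l ih => simpa using sub_mem (hU g _ ih) ih

theorem subOneProd_map_apply_of_eqOn {U : Submodule k V}
    (hU : ∀ g : G, ∀ v ∈ U, ρ g v ∈ U) {r : G → G} (hr : ∀ g, ∀ u ∈ U, ρ (r g) u = ρ g u)
    (l : List G) {u : V} (hu : u ∈ U) :
    ρ.subOneProd (l.map r) u = ρ.subOneProd l u := by
  induction l with
  | nil => rfl
  | cons g l ih =>
    simp [ih, hr g _ (ρ.subOneProd_apply_mem_of_forall_mem hU l hu)]

theorem subOneProd_map_apply_of_eqOn_invariantsSeries_two {r : G → G}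
    (hr : ∀ g, ∀ w ∈ ρ.invariantsSeries 2, ρ (r g) w = ρ g w) (l : List G) {v : V}
    (hv : v ∈ ρ.invariantsSeries (l.length + 1)) :
    ρ.subOneProd (l.map r) v = ρ.subOneProd l v := by
  induction l generalizing v with
  | nil => rfl
  | cons g l ih =>
    have hv' : v ∈ ρ.invariantsSeries (2 + l.length) := by
      rwa [List.length_cons, add_assoc, add_comm] at hv
    have hw : ρ.subOneProd (l.map r) v ∈ ρ.invariantsSeries 2 :=
      ρ.subOneProd_apply_mem (l.map r) (by rwa [List.length_map])
    calc ρ.subOneProd ((g :: l).map r) v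
        = (ρ (r g) - 1) (ρ.subOneProd (l.map r) v) := rfl
      _ = (ρ g - 1) (ρ.subOneProd (l.map r) v) := by
        simp only [LinearMap.sub_apply, hr g _ hw]
      _ = ρ.subOneProd (l.map r) ((ρ g - 1) v) := ρ.subOneProd_cons_apply g (l.map r) v
      _ = ρ.subOneProd l ((ρ g - 1) v) := ih (mem_invariantsSeries_succ.1 hv g)
      _ = ρ.subOneProd (g :: l) v := (ρ.subOneProd_cons_apply g l v).symm

theorem exists_finset_representatives [Finite k] (U : Submodule k V) [FiniteDimensional k U]
    (hU : ∀ g : G, ∀ v ∈ U, ρ g v ∈ U) :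
    ∃ (R : Finset G) (r : G → G), (∀ g, r g ∈ R) ∧ ∀ g, ∀ u ∈ U, ρ (r g) u = ρ g u := by
  have : Finite U := Module.finite_of_finite k
  let E : G → U → U := fun g u => ⟨ρ g u, hU g u u.2⟩
  have hfin : (Set.range (Function.invFun E ∘ E)).Finite := by
    rw [Set.range_comp]
    exact (Set.toFinite _).image _
  refine ⟨hfin.toFinset, Function.invFun E ∘ E, fun g => hfin.mem_toFinset.2 ⟨g, rfl⟩,
    fun g u hu => ?_⟩
  exact congrArg Subtype.val (congrFun (Function.invFun_eq (f := E) ⟨g, rfl⟩) ⟨u, hu⟩)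

theorem finiteDimensional_invariantsSeries_two [FiniteDimensional k ρ.invariants]
    [FiniteDimensional k ρ.quotInvariants.invariants] :
    FiniteDimensional k (ρ.invariantsSeries 2) := by
  have hmap : (ρ.invariantsSeries 2).map ρ.invariants.mkQ ≤ ρ.quotInvariants.invariants := by
    rintro _ ⟨v, hv, rfl⟩ g
    have := mem_invariantsSeries_succ.1 hv g
    rw [invariantsSeries_one] at this
    exact (Submodule.Quotient.eq _).2 this
  have hker : ρ.invariantsSeries 2 ⊓ LinearMap.ker ρ.invariants.mkQ ≤ ρ.invariants := by
    simp
  rw [← Submodule.fg_iff_finiteDimensional]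
  exact Submodule.fg_of_fg_map_of_fg_inf_ker _
    ((Submodule.fg_iff_finiteDimensional _).2 inferInstance |>.of_le hmap)
    ((Submodule.fg_iff_finiteDimensional _).2 inferInstance |>.of_le hker)

/-- `Ψ` records all products of `n` operators `ρ r - 1` with `r ∈ R`: on `invariantsSeries (n + 1)`
it takes values in the invariants and its kernel is `invariantsSeries n`. -/
theorem finiteDimensional_invariantsSeries_succ {R : Finset G} {r : G → G} (hrR : ∀ g, r g ∈ R)
    (hr : ∀ g, ∀ w ∈ ρ.invariantsSeries 2, ρ (r g) w = ρ g w) (n : ℕ)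
    [FiniteDimensional k (ρ.invariantsSeries 1)] [FiniteDimensional k (ρ.invariantsSeries n)] :
    FiniteDimensional k (ρ.invariantsSeries (n + 1)) := by
  let Ψ : V →ₗ[k] (Fin n → R) → V :=
    LinearMap.pi fun c => ρ.subOneProd (List.ofFn fun j => (c j : G))
  have hmap : (ρ.invariantsSeries (n + 1)).map Ψ ≤
      Submodule.pi Set.univ fun _ => ρ.invariantsSeries 1 := by
    rintro _ ⟨v, hv, rfl⟩ c -
    exact ρ.subOneProd_apply_mem _ (by rwa [List.length_ofFn, add_comm])
  have hker : ρ.invariantsSeries (n + 1) ⊓ LinearMap.ker Ψ ≤ ρ.invariantsSeries n := by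
    rintro v ⟨hv, hΨ⟩
    refine ρ.mem_invariantsSeries_of_subOneProd fun l hl => ?_
    subst hl
    rw [← ρ.subOneProd_map_apply_of_eqOn_invariantsSeries_two hr l hv,
      ← List.ofFn_getElem_eq_map]
    exact congrFun hΨ fun j => ⟨r l[j], hrR _⟩
  rw [← Submodule.fg_iff_finiteDimensional]
  exact Submodule.fg_of_fg_map_of_fg_inf_ker Ψ
    ((Submodule.fg_pi fun _ => (Submodule.fg_iff_finiteDimensional _).2 inferInstance).of_le hmap)
    ((Submodule.fg_iff_finiteDimensional _).2 inferInstance |>.of_le hker)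

variable {p : ℕ} [Fact p.Prime] [CharP k p]

theorem sub_one_pow_eq_zero (hG : ∀ g : G, g ^ p = 1) (g : G) : (ρ g - 1) ^ p = 0 := by
  rcases subsingleton_or_nontrivial V with _ | _
  · exact Subsingleton.elim _ _
  have : CharP (Module.End k V) p := charP_of_injective_algebraMap' k p
  rw [sub_pow_char_of_commute p (Commute.one_right _), one_pow, ← map_pow, hG, map_one, sub_self]

theorem subOneProd_eq_zero (hG : ∀ g : G, g ^ p = 1) {R : Finset G} {l : List G}
    (hl : ∀ g ∈ l, g ∈ R) (hlen : R.card * (p - 1) < l.length) : ρ.subOneProd l = 0 := by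
  classical
  obtain ⟨_, ha, hcount⟩ := List.exists_lt_count_of_mul_lt_length
    (s := R.image fun g => ρ g - 1) (l := l.map fun g => ρ g - 1)
    (by simpa using fun g hg => ⟨g, hl g hg, rfl⟩)
    (by simpa using (Nat.mul_le_mul_right _ Finset.card_image_le).trans_lt hlen)
  obtain ⟨g, -, rfl⟩ := Finset.mem_image.1 ha
  exact List.prod_eq_zero_of_le_count
    (List.pairwise_map.2 (List.pairwise_of_forall ρ.commute_sub_one))
    (ρ.sub_one_pow_eq_zero hG g) (by omega)

theorem exists_mem_invariantsSeries [Finite k] (hG : ∀ g : G, g ^ p = 1)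
    (hlf : ρ.IsLocallyFinite) (v : V) : ∃ n, v ∈ ρ.invariantsSeries n := by
  obtain ⟨U, hU, hvU, _⟩ := hlf {v}
  obtain ⟨R, r, hrR, hr⟩ := ρ.exists_finset_representatives U hU
  refine ⟨R.card * (p - 1) + 1, ρ.mem_invariantsSeries_of_subOneProd fun l hl => ?_⟩
  rw [← ρ.subOneProd_map_apply_of_eqOn hU hr l (hvU (by simp)),
    ρ.subOneProd_eq_zero hG (by simpa using fun g _ => hrR g) (by simp [hl]),
    LinearMap.zero_apply]

theorem invariantsSeries_le {R : Finset G} {r : G → G} (hrR : ∀ g, r g ∈ R)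
    (hr : ∀ g, ∀ w ∈ ρ.invariantsSeries 2, ρ (r g) w = ρ g w) (hG : ∀ g : G, g ^ p = 1)
    (n : ℕ) : ρ.invariantsSeries n ≤ ρ.invariantsSeries (R.card * (p - 1) + 1) := by
  induction n with
  | zero => exact bot_le
  | succ n ih =>
    rcases le_or_gt (n + 1) (R.card * (p - 1) + 1) with hn | hn
    · exact ρ.invariantsSeries_mono hn
    refine le_trans (fun v hv => ρ.mem_invariantsSeries_of_subOneProd fun l hl => ?_) ih
    rw [← ρ.subOneProd_map_apply_of_eqOn_invariantsSeries_two hr l (hl ▸ hv),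
      ρ.subOneProd_eq_zero hG (by simpa using fun g _ => hrR g) (by rw [List.length_map, hl]; omega),
      LinearMap.zero_apply]

theorem finiteDimensional_of_isLocallyFinite [Finite k] (hG : ∀ g : G, g ^ p = 1)
    (hlf : ρ.IsLocallyFinite) [FiniteDimensional k ρ.invariants]
    [FiniteDimensional k ρ.quotInvariants.invariants] : FiniteDimensional k V := by
  have : FiniteDimensional k (ρ.invariantsSeries 1) := ρ.invariantsSeries_one ▸ inferInstance
  have := ρ.finiteDimensional_invariantsSeries_two
  obtain ⟨R, r, hrR, hr⟩ :=
    ρ.exists_finset_representatives (ρ.invariantsSeries 2) fun g _ => ρ.map_mem_invariantsSeries 2 g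
  have hfd (n : ℕ) : FiniteDimensional k (ρ.invariantsSeries n) := by
    induction n with
    | zero => rw [invariantsSeries_zero]; infer_instance
    | succ n ih => exact ρ.finiteDimensional_invariantsSeries_succ hrR hr n
  have htop : ρ.invariantsSeries (R.card * (p - 1) + 1) = ⊤ := eq_top_iff.2 fun v _ => by
    obtain ⟨n, hn⟩ := ρ.exists_mem_invariantsSeries hG hlf v
    exact ρ.invariantsSeries_le hrR hr hG n hn
  exact Module.finite_def.2 (htop ▸ (Submodule.fg_iff_finiteDimensional _).2 (hfd _))

end Representation

theorem stmt_18 (p : ℕ) [Fact p.Prime]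
    (V : Type*) [AddCommGroup V] [Module (ZMod p) V]
    (ρ : Representation (ZMod p) (Multiplicative (LaurentSeries (ZMod p))) V)
    (hlf : ρ.IsLocallyFinite)
    (hinf : ¬ FiniteDimensional (ZMod p) V)
    (hfixfin : FiniteDimensional (ZMod p) (Representation.invariants ρ)) :
    (∀ x : LaurentSeries (ZMod p), p • x = 0) ∧
      ¬ FiniteDimensional (ZMod p) (Representation.invariants ρ.quotInvariants) := by
  have hchar (x : LaurentSeries (ZMod p)) : p • x = 0 := by
    rw [← Nat.cast_smul_eq_nsmul (ZMod p), ZMod.natCast_self, zero_smul]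
  refine ⟨hchar, fun _ => hinf (ρ.finiteDimensional_of_isLocallyFinite (p := p) (fun g => ?_) hlf)⟩
  exact Multiplicative.toAdd.injective (by rw [toAdd_pow, toAdd_one, hchar])
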